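/- Let V be a nonempty finite set and let P be any set of unordered pairs of distinct half-edges (a half-edge is a pair (v,i) with v ∈ V, i ∈ {1,2,3}; the two half-edges in a pair may belong to the same vertex) such that each half-edge belongs to at most one pair of P. Let C_P ⊆ (V → ℝ¹⁰) be the convex cone of all functions f : V → ℝ¹⁰, f(v) = (x_v, L_v), such that f(v) ∈ C for every v, all level coordinates L_v are equal, and ∂ᵢ(x_v) = σ(∂ⱼ(x_w)) for every pair {(v,i),(w,j)} ∈ P, where ∂ is extended ℝ-linearly and σ(p,q) = (q,p). Let ω_P : V → ℤ¹⁰ be the function with ω_P(v) = (1,1,1,1,1,1,1,1,1,6) for all v. Then relint(C_P) ∩ (V → ℤ¹⁰) = {ω_P + u : u ∈ C_P ∩ (V → ℤ¹⁰)}, where relint denotes the intrinsic (relative) interior. (This is the combinatorial Gorenstein property, with canonical generator in level 6, of the glued conformal-block cone of any trivalent graph.) -/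

import Mathlib

/-- The nine generators `g_X, g_S, g_T, g₁₂, g₂₃, g₃₁, g₂₁, g₃₂, g₁₃` of the
trinode cone in `ℤ¹⁰ = ℤ⁹ × ℤ` (first nine coordinates ordered
`(a₁,b₁,c₁,a₂,a₃,b₂,b₃,c₂,c₃)`, last coordinate the level). -/
def cbGens : Fin 9 → Fin 10 → ℤ :=
  ![![0, 0, 0, 0, 0, 0, 0, 0, 0, 1],  -- g_X
    ![0, 0, 0, 1, 0, 1, 0, 1, 0, 1],  -- g_S
    ![0, 0, 0, 0, 1, 0, 1, 0, 1, 1],  -- g_T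
    ![0, 0, 0, 1, 0, 0, 1, 0, 0, 1],  -- g₁₂
    ![0, 0, 0, 0, 0, 1, 0, 0, 1, 1],  -- g₂₃
    ![0, 0, 0, 0, 1, 0, 0, 1, 0, 1],  -- g₃₁
    ![0, 1, 0, 0, 0, 0, 0, 0, 0, 1],  -- g₂₁
    ![0, 0, 1, 0, 0, 0, 0, 0, 0, 1],  -- g₃₂
    ![1, 0, 0, 0, 0, 0, 0, 0, 0, 1]]  -- g₁₃

/-- The real versions of the nine generators. -/
noncomputable def cbGensR (i : Fin 9) : Fin 10 → ℝ := fun t => (cbGens i t : ℝ)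

/-- The polyhedral cone `C ⊆ ℝ¹⁰` generated by the nine vectors. -/
def coneC : Set (Fin 10 → ℝ) :=
  {y | ∃ c : Fin 9 → ℝ, (∀ i, 0 ≤ c i) ∧ y = ∑ i : Fin 9, c i • cbGensR i}

/-- The (ℝ-linearly extended) boundary map applied to the `ℝ⁹`-part of a point of
`ℝ¹⁰`: `∂(x) = ((a₁+a₂, a₃+b₁), (b₁+b₂, b₃+c₁), (c₁+c₂, c₃+a₁))`. -/
def bd10R (y : Fin 10 → ℝ) : Fin 3 → ℝ × ℝ :=
  ![(y 0 + y 3, y 4 + y 1), (y 1 + y 5, y 6 + y 2), (y 2 + y 7, y 8 + y 0)]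

/-- The swap `σ(p, q) = (q, p)`. -/
def swR (p : ℝ × ℝ) : ℝ × ℝ := (p.2, p.1)

/-- The glued cone `C_P ⊆ (V → ℝ¹⁰)` of a trivalent graph: functions `f` with
`f v ∈ C` for all `v`, all level coordinates equal, and matching dually along every
pair of half-edges in `P`. -/
def gluedCone (V : Type) (P : Set (Sym2 (V × Fin 3))) : Set (V → Fin 10 → ℝ) :=
  {f | (∀ v, f v ∈ coneC) ∧ (∀ v w, f v 9 = f w 9) ∧
    ∀ (v w : V) (i j : Fin 3),
      s((v, i), (w, j)) ∈ P → bd10R (f v) i = swR (bd10R (f w) j)}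

/-- `ω_P : V → ℤ¹⁰`, with all nine triangle entries `1` and level `6` at each vertex. -/
def omegaP (V : Type) : V → Fin 10 → ℤ := fun _ => ![1, 1, 1, 1, 1, 1, 1, 1, 1, 6]

/-!
The trinode cone `C` is cut out of a linear subspace by twelve integral facet inequalities, each
taking the value `1` at `(1, …, 1, 6)`. The glued cone `C_P` is cut out of a linear subspace
containing `ω_P` by the same inequalities at every vertex, so its relative interior is where all
facet functionals are positive. At a lattice point they are integers, hence `≥ 1`, which says
exactly that `x - ω_P ∈ C_P`.
-/

open Set Topology Matrix

section TopologicalVectorSpace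

variable {E : Type*} [AddCommGroup E] [Module ℝ E] [TopologicalSpace E]
  [IsTopologicalAddGroup E] [ContinuousSMul ℝ E]

theorem exists_sub_smul_mem_of_mem_intrinsicInterior {K : Set E} {x w : E}
    (h0 : (0 : E) ∈ K) (hw : w ∈ K) (hx : x ∈ intrinsicInterior ℝ K) :
    ∃ ε > (0 : ℝ), x - ε • w ∈ K := by
  obtain ⟨p, hp, rfl⟩ := mem_intrinsicInterior.mp hx
  have hline (r : ℝ) : (p : E) - r • w ∈ affineSpan ℝ K := by
    have := AffineSubspace.smul_vsub_vadd_mem (affineSpan ℝ K) r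
      (subset_affineSpan ℝ K h0) (subset_affineSpan ℝ K hw) p.2
    rwa [vsub_eq_sub, zero_sub, smul_neg, vadd_eq_add, neg_add_eq_sub] at this
  let γ : ℝ → affineSpan ℝ K := fun r => ⟨p - r • w, hline r⟩
  have hγ : Continuous γ := by fun_prop
  have hγ0 : γ 0 = p := Subtype.ext (by simp [γ])
  have hnear : ∀ᶠ r in 𝓝 (0 : ℝ), γ r ∈ interior (Subtype.val ⁻¹' K) :=
    hγ.continuousAt.preimage_mem_nhds (hγ0 ▸ isOpen_interior.mem_nhds hp)
  obtain ⟨ε, hεK, hε⟩ :=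
    ((hnear.filter_mono nhdsWithin_le_nhds).and (self_mem_nhdsWithin (s := Ioi 0))).exists
  exact ⟨ε, hε, interior_subset (s := Subtype.val ⁻¹' K) hεK⟩

end TopologicalVectorSpace

section InequalityCone

variable {E ι : Type*} [AddCommGroup E] [Module ℝ E]

def inequalityCone (L : Submodule ℝ E) (ℓ : ι → E →ₗ[ℝ] ℝ) : Set E :=
  {x | x ∈ L ∧ ∀ i, 0 ≤ ℓ i x}

variable {L : Submodule ℝ E} {ℓ : ι → E →ₗ[ℝ] ℝ} {x w : E}

theorem zero_mem_inequalityCone : (0 : E) ∈ inequalityCone L ℓ :=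
  ⟨L.zero_mem, fun i => (map_zero (ℓ i)).ge⟩

variable [TopologicalSpace E] [IsTopologicalAddGroup E] [ContinuousSMul ℝ E] [T2Space E]
  [FiniteDimensional ℝ E] [Finite ι]

theorem mem_intrinsicInterior_inequalityCone_of_pos (hxL : x ∈ L) (hx : ∀ i, 0 < ℓ i x) :
    x ∈ intrinsicInterior ℝ (inequalityCone L ℓ) := by
  set K := inequalityCone L ℓ
  have hxK : x ∈ K := ⟨hxL, fun i => (hx i).le⟩
  refine mem_intrinsicInterior.mpr ⟨⟨x, subset_affineSpan ℝ K hxK⟩, ?_, rfl⟩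
  let U : Set (affineSpan ℝ K) := {g | ∀ i, 0 < ℓ i g}
  have hUopen : IsOpen U := by
    simp only [U, ofPred_forall]
    exact isOpen_iInter_of_finite fun i => isOpen_lt continuous_const
      ((ℓ i).continuous_of_finiteDimensional.comp continuous_subtype_val)
  have hspan : affineSpan ℝ K ≤ L.toAffineSubspace := affineSpan_le.mpr fun y hy => hy.1
  have hUK : U ⊆ Subtype.val ⁻¹' K := fun g hg => ⟨hspan g.2, fun i => (hg i).le⟩
  exact interior_maximal hUK hUopen hx

theorem mem_intrinsicInterior_inequalityCone_iff (hwL : w ∈ L) (hw : ∀ i, 0 < ℓ i w) :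
    x ∈ intrinsicInterior ℝ (inequalityCone L ℓ) ↔ x ∈ L ∧ ∀ i, 0 < ℓ i x := by
  refine ⟨fun hx => ⟨(intrinsicInterior_subset hx).1, fun i => ?_⟩,
    fun hx => mem_intrinsicInterior_inequalityCone_of_pos hx.1 hx.2⟩
  obtain ⟨ε, hε, hxε⟩ := exists_sub_smul_mem_of_mem_intrinsicInterior zero_mem_inequalityCone
    ⟨hwL, fun i => (hw i).le⟩ hx
  have := hxε.2 i
  rw [map_sub, map_smul, smul_eq_mul, sub_nonneg] at this
  exact (mul_pos hε (hw i)).trans_le this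

theorem mem_intrinsicInterior_inequalityCone_iff_sub_mem (hwL : w ∈ L) (hw : ∀ i, ℓ i w = 1)
    (hx : ∀ i, ∃ n : ℤ, ℓ i x = n) :
    x ∈ intrinsicInterior ℝ (inequalityCone L ℓ) ↔ x - w ∈ inequalityCone L ℓ := by
  rw [mem_intrinsicInterior_inequalityCone_iff hwL (fun i => (hw i).symm ▸ one_pos),
    inequalityCone, mem_ofPred_eq, L.sub_mem_iff_left hwL]
  refine and_congr_right fun _ => forall_congr' fun i => ?_
  obtain ⟨n, hn⟩ := hx i
  rw [map_sub, hw, hn, sub_nonneg]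
  norm_cast

end InequalityCone

/-- The two linear relations `a₂ + a₃ = b₃ + c₂` and `a₂ + c₃ = b₂ + b₃` holding on `C`. -/
def trinodeEquations : Matrix (Fin 2) (Fin 10) ℝ :=
  !![0, 0, 0, 1, 1, 0, -1, -1, 0, 0;
     0, 0, 0, 1, 0, -1, -1, 0, 1, 0]

def trinodeSpan : Submodule ℝ (Fin 10 → ℝ) := LinearMap.ker trinodeEquations.mulVecLin

/-- Facet normals of `C`: the nine coordinates, and `level - (a₁ + b₁ + c₁) - q` for `q` one of
`a₂ + c₃`, `a₃ + b₂`, `b₃ + c₂`. -/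
def trinodeFacets : Matrix (Fin 12) (Fin 10) ℤ :=
  !![1, 0, 0, 0, 0, 0, 0, 0, 0, 0;
     0, 1, 0, 0, 0, 0, 0, 0, 0, 0;
     0, 0, 1, 0, 0, 0, 0, 0, 0, 0;
     0, 0, 0, 1, 0, 0, 0, 0, 0, 0;
     0, 0, 0, 0, 1, 0, 0, 0, 0, 0;
     0, 0, 0, 0, 0, 1, 0, 0, 0, 0;
     0, 0, 0, 0, 0, 0, 1, 0, 0, 0;
     0, 0, 0, 0, 0, 0, 0, 1, 0, 0;
     0, 0, 0, 0, 0, 0, 0, 0, 1, 0;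
     -1, -1, -1, -1, 0, 0, 0, 0, -1, 1;
     -1, -1, -1, 0, -1, -1, 0, 0, 0, 1;
     -1, -1, -1, 0, 0, 0, -1, -1, 0, 1]

noncomputable def trinodeFacet (k : Fin 12) : (Fin 10 → ℝ) →ₗ[ℝ] ℝ :=
  LinearMap.proj k ∘ₗ (trinodeFacets.map (Int.cast : ℤ → ℝ)).mulVecLin

theorem trinodeFacet_intCast (k : Fin 12) (z : Fin 10 → ℤ) :
    trinodeFacet k (fun t => (z t : ℝ)) = ((trinodeFacets *ᵥ z) k : ℤ) :=
  ((Int.castRingHom ℝ).map_mulVec trinodeFacets z k).symm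

theorem trinodeFacets_mulVec_omega : trinodeFacets *ᵥ ![1, 1, 1, 1, 1, 1, 1, 1, 1, 6] = 1 := by
  decide

theorem mem_trinodeSpan_iff (y : Fin 10 → ℝ) :
    y ∈ trinodeSpan ↔ y 3 + y 4 = y 6 + y 7 ∧ y 3 + y 8 = y 5 + y 6 := by
  simp only [trinodeSpan, LinearMap.mem_ker, mulVecLin_apply, funext_iff, Fin.forall_fin_two]
  simp [trinodeEquations, dotProduct, Fin.sum_univ_succ]
  constructor <;> rintro ⟨h1, h2⟩ <;> constructor <;> linarith

theorem sum_smul_cbGensR (c : Fin 9 → ℝ) :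
    ∑ i, c i • cbGensR i = ![c 8, c 6, c 7, c 1 + c 3, c 2 + c 5, c 1 + c 4, c 2 + c 3,
      c 1 + c 5, c 2 + c 4, ∑ i, c i] := by
  funext t
  fin_cases t <;> simp [cbGensR, cbGens, Fin.sum_univ_succ]

theorem coneC_eq : coneC = inequalityCone trinodeSpan trinodeFacet := by
  ext y
  simp only [inequalityCone, mem_ofPred_eq, mem_trinodeSpan_iff]
  constructor
  · rintro ⟨c, hc, rfl⟩
    rw [sum_smul_cbGensR]
    refine ⟨by simp; constructor <;> ring, fun k => ?_⟩
    fin_cases k <;> simp [trinodeFacet, trinodeFacets, mulVec, dotProduct, Fin.sum_univ_succ] <;>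
      linarith [hc 0, hc 1, hc 2, hc 3, hc 4, hc 5, hc 6, hc 7, hc 8]
  · rintro ⟨⟨h1, h2⟩, hk⟩
    simp [Fin.forall_fin_succ, trinodeFacet, trinodeFacets, mulVec, dotProduct,
      Fin.sum_univ_succ] at hk
    obtain ⟨ha₁, hb₁, hc₁, ha₂, ha₃, hb₂, hb₃, hc₂, hc₃, hlev₁, hlev₂, hlev₃⟩ := hk
    -- `g_X + g_S + g_T = g₁₂ + g₂₃ + g₃₁`, so the coefficients are only determined up to this
    -- relation; `s` is the least `g_S`-coefficient keeping those of `g_X` and `g_T` nonnegative.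
    set s := max 0 (max (y 3 - y 6) (y 0 + y 1 + y 2 + y 5 + y 6 + y 7 - y 9))
    have hs₀ : 0 ≤ s := le_max_left _ _
    have hs₁ : y 3 - y 6 ≤ s := (le_max_left _ _).trans (le_max_right _ _)
    have hs₂ : y 0 + y 1 + y 2 + y 5 + y 6 + y 7 - y 9 ≤ s :=
      (le_max_right _ _).trans (le_max_right _ _)
    have hs₃ : s ≤ y 3 := max_le ha₂ (max_le (by linarith) (by linarith))
    have hs₅ : s ≤ y 5 := max_le hb₂ (max_le (by linarith) (by linarith))
    have hs₇ : s ≤ y 7 := max_le hc₂ (max_le (by linarith) (by linarith))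
    refine ⟨![y 9 - y 0 - y 1 - y 2 - y 5 - y 6 - y 7 + s, s, s + y 6 - y 3,
      y 3 - s, y 5 - s, y 7 - s, y 1, y 2, y 0], fun i => ?_, ?_⟩
    · fin_cases i <;> simp <;> linarith
    · rw [sum_smul_cbGensR]
      funext t
      fin_cases t <;> simp [Fin.sum_univ_succ] <;> linarith

theorem bd10R_add (y z : Fin 10 → ℝ) : bd10R (y + z) = bd10R y + bd10R z := by
  funext i
  fin_cases i <;> simp [bd10R] <;> constructor <;> ring

theorem bd10R_smul (c : ℝ) (y : Fin 10 → ℝ) : bd10R (c • y) = c • bd10R y := by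
  funext i
  fin_cases i <;> simp [bd10R] <;> constructor <;> ring

def gluedSpan (V : Type) (P : Set (Sym2 (V × Fin 3))) : Submodule ℝ (V → Fin 10 → ℝ) where
  carrier := {f | (∀ v, f v ∈ trinodeSpan) ∧ (∀ v w, f v 9 = f w 9) ∧
    ∀ (v w : V) (i j : Fin 3), s((v, i), (w, j)) ∈ P → bd10R (f v) i = swR (bd10R (f w) j)}
  add_mem' := by
    rintro f g ⟨hfC, hfL, hfP⟩ ⟨hgC, hgL, hgP⟩
    refine ⟨fun v => add_mem (hfC v) (hgC v), fun v w => ?_, fun v w i j h => ?_⟩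
    · simp [hfL v w, hgL v w]
    · simp [bd10R_add, hfP v w i j h, hgP v w i j h, swR]
  zero_mem' := by
    refine ⟨fun v => zero_mem _, fun v w => rfl, fun v w i j _ => ?_⟩
    have h0 : bd10R 0 = 0 := by simpa using bd10R_smul 0 0
    simp [h0, swR, Prod.ext_iff]
  smul_mem' := by
    rintro c f ⟨hfC, hfL, hfP⟩
    refine ⟨fun v => Submodule.smul_mem _ c (hfC v), fun v w => ?_, fun v w i j h => ?_⟩
    · simp [hfL v w]
    · simp [bd10R_smul, hfP v w i j h, swR]

theorem mem_gluedSpan_iff {V : Type} {P : Set (Sym2 (V × Fin 3))} {f : V → Fin 10 → ℝ} :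
    f ∈ gluedSpan V P ↔ (∀ v, f v ∈ trinodeSpan) ∧ (∀ v w, f v 9 = f w 9) ∧
      ∀ (v w : V) (i j : Fin 3), s((v, i), (w, j)) ∈ P → bd10R (f v) i = swR (bd10R (f w) j) :=
  Iff.rfl

noncomputable def gluedFacet (V : Type) (vk : V × Fin 12) : (V → Fin 10 → ℝ) →ₗ[ℝ] ℝ :=
  trinodeFacet vk.2 ∘ₗ LinearMap.proj vk.1

theorem gluedCone_eq (V : Type) (P : Set (Sym2 (V × Fin 3))) :
    gluedCone V P = inequalityCone (gluedSpan V P) (gluedFacet V) := by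
  ext f
  simp only [gluedCone, coneC_eq, inequalityCone, mem_ofPred_eq, mem_gluedSpan_iff, gluedFacet,
    LinearMap.comp_apply, LinearMap.proj_apply, forall_and, Prod.forall]
  tauto

theorem gluedFacet_intCast (V : Type) (vk : V × Fin 12) (z : V → Fin 10 → ℤ) :
    gluedFacet V vk (fun v t => (z v t : ℝ)) = ((trinodeFacets *ᵥ z vk.1) vk.2 : ℤ) :=
  trinodeFacet_intCast vk.2 (z vk.1)

theorem gluedFacet_omegaP (V : Type) (vk : V × Fin 12) :
    gluedFacet V vk (fun v t => (omegaP V v t : ℝ)) = 1 := by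
  simp [gluedFacet_intCast, omegaP, trinodeFacets_mulVec_omega]

theorem omegaP_mem_gluedSpan (V : Type) (P : Set (Sym2 (V × Fin 3))) :
    (fun v t => (omegaP V v t : ℝ)) ∈ gluedSpan V P := by
  refine ⟨fun v => ?_, fun v w => rfl, fun v w i j _ => ?_⟩
  · simp [mem_trinodeSpan_iff, omegaP]
  · fin_cases i <;> fin_cases j <;> simp [bd10R, swR, omegaP]

theorem stmt_18_general (V : Type) [Fintype V]
    (P : Set (Sym2 (V × Fin 3)))
    (x : V → Fin 10 → ℤ) :
    ((fun v t => (x v t : ℝ)) ∈ intrinsicInterior ℝ (gluedCone V P)) ↔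
      ∃ u : V → Fin 10 → ℤ,
        ((fun v t => (u v t : ℝ)) ∈ gluedCone V P) ∧ x = omegaP V + u := by
  rw [gluedCone_eq, mem_intrinsicInterior_inequalityCone_iff_sub_mem (omegaP_mem_gluedSpan V P)
    (gluedFacet_omegaP V) fun vk => ⟨_, gluedFacet_intCast V vk x⟩]
  constructor
  · refine fun h => ⟨x - omegaP V, ?_, (add_sub_cancel _ _).symm⟩
    convert h using 1
    funext v t; simp
  · rintro ⟨u, hu, rfl⟩
    convert hu using 1
    funext v t; simp

/-- Combinatorial Gorenstein property of the glued conformal-block cone of any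
trivalent graph (`V` a nonempty finite set, `P` a set of unordered pairs of distinct
half-edges, each half-edge in at most one pair): the lattice points of the relative
(intrinsic) interior of `C_P` are exactly `ω_P + (C_P ∩ ℤ)`, with canonical generator
`ω_P` in level `6`. -/
theorem stmt_18 (V : Type) [Fintype V] [Nonempty V]
    (P : Set (Sym2 (V × Fin 3)))
    (hndiag : ∀ p ∈ P, ¬ p.IsDiag)
    (hdisj : ∀ p ∈ P, ∀ q ∈ P, ∀ h : V × Fin 3, h ∈ p → h ∈ q → p = q)
    (x : V → Fin 10 → ℤ) :
    ((fun v t => (x v t : ℝ)) ∈ intrinsicInterior ℝ (gluedCone V P)) ↔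
      ∃ u : V → Fin 10 → ℤ,
        ((fun v t => (u v t : ℝ)) ∈ gluedCone V P) ∧ x = omegaP V + u :=
  stmt_18_general V P x
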